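/- arXiv:math/0604294 — 5 statements merged into one kernel-verified Lean document; each statement's English description precedes it below -/
import Mathlib

section
/- Orthonormal basis from a compact open subgroup: Let G₀ be a second-countable metrizable LCA group containing a compact open subgroup K, with Haar measure normalized so that K has measure 1. Let D₁ be a complete set of coset representatives of G₀/K in G₀ and D₂ a complete set of coset representatives of Ĝ₀/K⊥ in Ĝ₀, where K⊥ = {ξ ∈ Ĝ₀ : ⟨ξ,k⟩ = 1 for all k ∈ K}. Then the Gabor system {M_δ T_d χ_K : d ∈ D₁, δ ∈ D₂} is an orthonormal basis of L²(G₀). -/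
/- Common definitions: time-frequency analysis on locally compact abelian groups,
   following Gröchenig–Strohmer, "Pseudodifferential operators on locally compact
   abelian groups and Sjöstrand's symbol class". -/

noncomputable section

open MeasureTheory Complex Filter Topology ENNReal ComplexConjugate

namespace GSjo

/-- `p : H → G → ℂ` is a perfect duality pairing identifying the LCA group `H`
with the Pontryagin dual of the LCA group `G`. -/
structure IsDualPairing {G H : Type*} [AddCommGroup G] [TopologicalSpace G]
    [AddCommGroup H] [TopologicalSpace H] (p : H → G → ℂ) : Prop where
  continuous : Continuous fun q : H × G => p q.1 q.2
  norm_one : ∀ ξ x, ‖p ξ x‖ = 1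
  add_left : ∀ ξ η x, p (ξ + η) x = p ξ x * p η x
  add_right : ∀ ξ x y, p ξ (x + y) = p ξ x * p ξ y
  sep_left : ∀ ξ : H, ξ ≠ 0 → ∃ x, p ξ x ≠ 1
  sep_right : ∀ x : G, x ≠ 0 → ∃ ξ, p ξ x ≠ 1
  full : ∀ χ : G → ℂ, Continuous χ → (∀ x, ‖χ x‖ = 1) →
    (∀ x y, χ (x + y) = χ x * χ y) → ∃ ξ, ∀ x, χ x = p ξ x

variable {G H : Type*}

/-- The Fourier transform on `G` with respect to the Haar measure `μ` and the pairing `p`. -/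
def ft [MeasurableSpace G] (μ : Measure G) (p : H → G → ℂ) (f : G → ℂ) (ξ : H) : ℂ :=
  ∫ x, f x * conj (p ξ x) ∂μ

/-- `ν` is the dual Haar measure: Fourier inversion holds. -/
def FourierInversion [MeasurableSpace G] [MeasurableSpace H]
    (μ : Measure G) (ν : Measure H) (p : H → G → ℂ) : Prop :=
  ∀ f : G → ℂ, Integrable f μ → Integrable (ft μ p f) ν →
    ∀ᵐ x ∂μ, f x = ∫ ξ, ft μ p f ξ * p ξ x ∂ν

/-- The time-frequency shift `π(z) g = M_{z.2} T_{z.1} g`. -/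
def tfshift [AddGroup G] (p : H → G → ℂ) (z : G × H) (g : G → ℂ) : G → ℂ :=
  fun t => p z.2 t * g (t - z.1)

/-- The short-time Fourier transform `V_φ f (z) = ⟨f, π(z) φ⟩`. -/
def stft [AddGroup G] [MeasurableSpace G] (μ : Measure G) (p : H → G → ℂ)
    (φ : G → ℂ) (f : G → ℂ) (z : G × H) : ℂ :=
  ∫ t, f t * conj (tfshift p z φ t) ∂μ

/-- The Kohn–Nirenberg pseudodifferential operator `K_σ`. -/
def knOp [MeasurableSpace G] [MeasurableSpace H] (μ : Measure G) (ν : Measure H)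
    (p : H → G → ℂ) (σ : G × H → ℂ) (f : G → ℂ) (x : G) : ℂ :=
  ∫ ξ, σ (x, ξ) * ft μ p f ξ * p ξ x ∂ν

/-- The Kohn–Nirenberg operator applied to a function with prescribed Fourier transform `fh`. -/
def knOpF [MeasurableSpace H] (ν : Measure H) (p : H → G → ℂ)
    (σ : G × H → ℂ) (fh : H → ℂ) (x : G) : ℂ :=
  ∫ ξ, σ (x, ξ) * fh ξ * p ξ x ∂ν

/-- The pairing between the phase space `G×Ĝ` and its dual group `Ĝ×G`. -/
def phasePair (p : H → G → ℂ) : H × G → G × H → ℂ :=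
  fun ω z => p ω.1 z.1 * p z.2 ω.2

/-- The operator with spreading function `F`:  `∫ F(ω,u) M_ω T_{-u} f dω du`. -/
def spreadOp [AddGroup G] [MeasurableSpace G] [MeasurableSpace H]
    (μ : Measure G) (ν : Measure H) (p : H → G → ℂ)
    (F : H × G → ℂ) (f : G → ℂ) (x : G) : ℂ :=
  ∫ w : H × G, F w * p w.1 x * f (x + w.2) ∂(ν.prod μ)

/-- The symbol whose spreading function is `F`. -/
def symbolOfSpread [MeasurableSpace G] [MeasurableSpace H]
    (μ : Measure G) (ν : Measure H) (p : H → G → ℂ)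
    (F : H × G → ℂ) : G × H → ℂ :=
  fun z => ∫ w : H × G, F w * p w.1 z.1 * p z.2 w.2 ∂(ν.prod μ)

/-- The twisted convolution of two spreading functions on `Ĝ×G`. -/
def twistedConv [AddGroup G] [AddGroup H] [MeasurableSpace G] [MeasurableSpace H]
    (μ : Measure G) (ν : Measure H) (p : H → G → ℂ)
    (F F' : H × G → ℂ) : H × G → ℂ :=
  fun w => ∫ w' : H × G, F w' * F' (w.1 - w'.1, w.2 - w'.2) * p (w.1 - w'.1) w'.2 ∂(ν.prod μ)

/-- The (cross) Rihaczek distribution `R(f,g)(x,ξ) = f(x) conj(ĝ(ξ)) conj⟨ξ,x⟩`,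
with the Fourier transform `ĝ` passed explicitly as `gh`. -/
def rihaczek (p : H → G → ℂ) (f : G → ℂ) (gh : H → ℂ) : G × H → ℂ :=
  fun z => f z.1 * conj (gh z.2) * conj (p z.2 z.1)

/-- `fh` is the Fourier–Plancherel transform of `f ∈ L²(G)`. -/
def IsPlancherelFT [MeasurableSpace G] [MeasurableSpace H]
    (μ : Measure G) (ν : Measure H) (p : H → G → ℂ)
    (f : G → ℂ) (fh : H → ℂ) : Prop :=
  MemLp f 2 μ ∧ MemLp fh 2 ν ∧
    ∀ φ : G → ℂ, Integrable φ μ → MemLp φ 2 μ →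
      ∫ x, f x * conj (φ x) ∂μ = ∫ ξ, fh ξ * conj (ft μ p φ ξ) ∂ν

/-- An admissible weight on a product group `A × B` (e.g. on the phase space `G×Ĝ`):
continuous, nonnegative, normalized, even in each coordinate, submultiplicative and
satisfying the GRS condition. -/
structure AdmissibleWeight {A B : Type*} [AddCommGroup A] [AddCommGroup B]
    [TopologicalSpace A] [TopologicalSpace B] (v : A × B → ℝ) : Prop where
  nonneg : ∀ z, 0 ≤ v z
  continuous : Continuous v
  norm_zero : v 0 = 1
  even_left : ∀ x y, v (-x, y) = v (x, y)
  even_right : ∀ x y, v (x, -y) = v (x, y)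
  submul : ∀ z w, v (z + w) ≤ v z * v w
  grs : ∀ z, Tendsto (fun n : ℕ => (v (n • z)) ^ ((1 : ℝ) / n)) atTop (nhds 1)

/-- An admissible weight on a discrete group `D`. -/
structure AdmissibleWeightD {D : Type*} [AddCommGroup D] (v : D → ℝ) : Prop where
  nonneg : ∀ x, 0 ≤ v x
  norm_zero : v 0 = 1
  even : ∀ x, v (-x) = v x
  submul : ∀ x y, v (x + y) ≤ v x * v y
  grs : ∀ x, Tendsto (fun n : ℕ => (v (n • x)) ^ ((1 : ℝ) / n)) atTop (nhds 1)

/-- `m` is a `v`-moderate weight. -/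
def Moderate {P : Type*} [AddCommGroup P] (v m : P → ℝ) : Prop :=
  (∀ z, 0 ≤ m z) ∧ ∃ C > 0, ∀ z w, m (z + w) ≤ C * v w * m z

/-- Bounded measurable function (enough to define all the STFT integrals below). -/
def BddM {X : Type*} [MeasurableSpace X] (σ : X → ℂ) : Prop :=
  Measurable σ ∧ ∃ C, ∀ z, ‖σ z‖ ≤ C

/-- The norm of the generalized Sjöstrand class `M^{∞,1}_{v∘J⁻¹}(G×Ĝ)` with window `Φ`:
`∫_{Ĝ×G} sup_z |V_Φ σ(z,ω)| v(J⁻¹ ω) dω`, where `J⁻¹(ω₁,u) = (u,-ω₁)`. -/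
def sjoNorm [AddCommGroup G] [AddCommGroup H] [MeasurableSpace G] [MeasurableSpace H]
    (μ : Measure G) (ν : Measure H) (p : H → G → ℂ) (Φ : G × H → ℂ)
    (v : G × H → ℝ) (σ : G × H → ℂ) : ℝ≥0∞ :=
  ∫⁻ ω : H × G, (⨆ z : G × H, (‖stft (μ.prod ν) (phasePair p) Φ σ (z, ω)‖₊ : ℝ≥0∞)) *
    ENNReal.ofReal (v (ω.2, -ω.1)) ∂(ν.prod μ)

/-- The norm of the modulation space `M¹_v(G)` with window `φ`. -/
def m1Norm [AddCommGroup G] [MeasurableSpace G] [MeasurableSpace H]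
    (μ : Measure G) (ν : Measure H) (p : H → G → ℂ) (φ : G → ℂ)
    (v : G × H → ℝ) (g : G → ℂ) : ℝ≥0∞ :=
  ∫⁻ z : G × H, (‖stft μ p φ g z‖₊ : ℝ≥0∞) * ENNReal.ofReal (v z) ∂(μ.prod ν)

/-- `L^p`-norm (`p ∈ [1,∞]`) of an `ℝ≥0∞`-valued function. -/
def lpNormE {X : Type*} [MeasurableSpace X] (μ : Measure X) (p : ℝ≥0∞)
    (f : X → ℝ≥0∞) : ℝ≥0∞ :=
  if p = ∞ then essSup f μ else (∫⁻ x, f x ^ p.toReal ∂μ) ^ ((1 : ℝ) / p.toReal)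

/-- Mixed `L^{p,q}`-norm on a product measure space. -/
def mixedNorm {X Y : Type*} [MeasurableSpace X] [MeasurableSpace Y]
    (μ : Measure X) (ν : Measure Y) (p q : ℝ≥0∞) (F : X × Y → ℝ≥0∞) : ℝ≥0∞ :=
  lpNormE ν q (fun y => lpNormE μ p (fun x => F (x, y)))

/-- The norm of the modulation space `M^{p,q}_m(G)` with window `φ`. -/
def modNorm [AddCommGroup G] [MeasurableSpace G] [MeasurableSpace H]
    (μ : Measure G) (ν : Measure H) (p : H → G → ℂ) (φ : G → ℂ)
    (pp qq : ℝ≥0∞) (m : G × H → ℝ) (f : G → ℂ) : ℝ≥0∞ :=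
  mixedNorm μ ν pp qq (fun z => (‖stft μ p φ f z‖₊ : ℝ≥0∞) * ENNReal.ofReal (m z))

/-- `T` is the bounded operator on `L²(G)` represented by the Kohn–Nirenberg
operator with symbol `σ`. -/
def RepresentsL2 [AddCommGroup G] [TopologicalSpace G] [MeasurableSpace G] [MeasurableSpace H]
    (μ : Measure G) (ν : Measure H) (p : H → G → ℂ) (σ : G × H → ℂ)
    (T : Lp ℂ 2 μ →L[ℂ] Lp ℂ 2 μ) : Prop :=
  ∀ f : G → ℂ, Integrable f μ → ∀ hf : MemLp f 2 μ, Integrable (ft μ p f) ν →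
    (T (hf.toLp f) : G → ℂ) =ᵐ[μ] knOp μ ν p σ f

/-- The weak matrix coefficient `⟨K_σ π(z)g, π(y)g⟩` of a pseudodifferential operator
with respect to the Gabor system generated by `g`. -/
def gaborEntry [AddGroup G] [MeasurableSpace G] [MeasurableSpace H]
    (μ : Measure G) (ν : Measure H) (p : H → G → ℂ)
    (σ : G × H → ℂ) (g : G → ℂ) (z y : G × H) : ℂ :=
  ∫ w : G × H, σ w * ft μ p (tfshift p z g) w.2 * p w.2 w.1 *
    conj (tfshift p y g w.1) ∂(μ.prod ν)

/-- The norm of the (weighted) nonstationary Wiener algebra `C_v(D)` of matrices. -/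
def cvNorm {D : Type*} [AddCommGroup D] (v : D → ℝ) (A : D → D → ℂ) : ℝ≥0∞ :=
  ∑' j : D, (⨆ i : D, (‖A i (i - j)‖₊ : ℝ≥0∞)) * ENNReal.ofReal (v j)

/-- `T` is the bounded operator on `ℓ²(D)` with matrix `A`. -/
def MatRepr {D : Type*} [AddCommGroup D] (A : D → D → ℂ)
    (T : lp (fun _ : D => ℂ) 2 →L[ℂ] lp (fun _ : D => ℂ) 2) : Prop :=
  ∀ c : lp (fun _ : D => ℂ) 2, ∀ i : D, T c i = ∑' j : D, A i j * c j

/- ### The concrete structure-theorem setting `G ≅ ℝ^d × G₀` -/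

/-- The Gaussian window on `ℝ^d`. -/
def gaussW (d : ℕ) (x : Fin d → ℝ) : ℂ := Complex.exp (-(Real.pi : ℂ) * ∑ i, (x i : ℂ) ^ 2)

/-- The annihilator `K⊥` of the compact open subgroup `K`. -/
def Kperp {G₀ H₀ : Type*} (p₀ : H₀ → G₀ → ℂ) (K : Set G₀) : Set H₀ :=
  {ξ | ∀ k ∈ K, p₀ ξ k = 1}

/-- The test window `φ = (Gaussian) ⊗ χ_K` on `G = ℝ^d × G₀`. -/
def winG {G₀ : Type*} (d : ℕ) (K : Set G₀) : (Fin d → ℝ) × G₀ → ℂ :=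
  fun x => gaussW d x.1 * Set.indicator K (fun _ => (1 : ℂ)) x.2

/-- The test window `Φ = (Gaussian) ⊗ χ_{K×K⊥}` on the phase space `G×Ĝ`. -/
def winP {G₀ H₀ : Type*} (d : ℕ) (p₀ : H₀ → G₀ → ℂ) (K : Set G₀) :
    ((Fin d → ℝ) × G₀) × ((Fin d → ℝ) × H₀) → ℂ :=
  fun z => gaussW d z.1.1 * gaussW d z.2.1 *
    Set.indicator K (fun _ => (1 : ℂ)) z.1.2 *
    Set.indicator (Kperp p₀ K) (fun _ => (1 : ℂ)) z.2.2

/-- The standard character pairing on `ℝ^d`. -/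
def eRd (d : ℕ) (ξ x : Fin d → ℝ) : ℂ :=
  Complex.exp (2 * (Real.pi : ℂ) * Complex.I * (∑ i, (ξ i : ℂ) * (x i : ℂ)))

/-- The duality pairing of `Ĝ = ℝ^d × Ĝ₀` with `G = ℝ^d × G₀`. -/
def pairG {G₀ H₀ : Type*} (d : ℕ) (p₀ : H₀ → G₀ → ℂ) :
    (Fin d → ℝ) × H₀ → (Fin d → ℝ) × G₀ → ℂ :=
  fun ξ x => eRd d ξ.1 x.1 * p₀ ξ.2 x.2


/-! `M_δ T_d χ_K` is the character `δ` restricted to the coset `d + K`. Atoms on different cosets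
have disjoint supports, and on one coset orthonormality reduces to `∫_K ⟨η, x⟩ dx = [η ∈ K⊥]`:
translating by `k ∈ K` multiplies this integral by `⟨η, k⟩`. For completeness, on a coset every
character is a constant multiple of one indexed by `D₂`, so a function orthogonal to all atoms is
orthogonal, on each compact coset, to all characters. By Stone–Weierstrass these span a dense
subspace of the continuous functions on the coset, hence of `L²` of it, so the function vanishes
there; and there are only countably many cosets, since they are disjoint open sets of a
second-countable group. -/

open Set Pointwise

theorem eq_of_sub_mem_of_existsUnique {A : Type*} [AddGroup A] {S D : Set A}
    (hD : ∀ x, ∃! d, d ∈ D ∧ x - d ∈ S) (hS : (0 : A) ∈ S) {d d' : A} (hd : d ∈ D)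
    (hd' : d' ∈ D) (h : d - d' ∈ S) : d = d' :=
  (hD d).unique ⟨hd, by rwa [sub_self]⟩ ⟨hd', h⟩

theorem mem_vadd_addSubgroup_iff {G : Type*} [AddCommGroup G] {K : AddSubgroup G} {d x : G} :
    x ∈ d +ᵥ (K : Set G) ↔ x - d ∈ K := by
  rw [mem_vadd_set_iff_neg_vadd_mem, vadd_eq_add, neg_add_eq_sub, SetLike.mem_coe]

theorem setIntegral_vadd {G E : Type*} [AddGroup G] [MeasurableSpace G] [MeasurableAdd G]
    [NormedAddCommGroup E] [NormedSpace ℝ E] (μ : Measure G) [μ.IsAddLeftInvariant]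
    (F : G → E) (d : G) (s : Set G) :
    ∫ x in d +ᵥ s, F x ∂μ = ∫ x in s, F (d + x) ∂μ := by
  rw [← image_vadd]
  exact (measurePreserving_add_left μ d).setIntegral_image_emb (measurableEmbedding_addLeft d) F s

theorem setIntegral_addSubgroup_eq_zero {G : Type*} [AddCommGroup G] [MeasurableSpace G]
    [MeasurableAdd G] (μ : Measure G) [μ.IsAddLeftInvariant] {χ : G → ℂ}
    (hχ : ∀ x y, χ (x + y) = χ x * χ y) {K : AddSubgroup G} {k₀ : G} (hk₀ : k₀ ∈ K)
    (hχk₀ : χ k₀ ≠ 1) : ∫ x in (K : Set G), χ x ∂μ = 0 := by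
  have hinv : χ k₀ * ∫ x in (K : Set G), χ x ∂μ = ∫ x in (K : Set G), χ x ∂μ := by
    conv_rhs => rw [← vadd_coe_set hk₀, setIntegral_vadd]
    simp only [hχ, integral_const_mul]
  have : (χ k₀ - 1) * ∫ x in (K : Set G), χ x ∂μ = 0 := by rw [sub_mul, hinv, one_mul, sub_self]
  exact (mul_eq_zero.mp this).resolve_left (sub_ne_zero.mpr hχk₀)

theorem iUnion_vadd_eq_univ_of_transversal {G : Type*} [AddCommGroup G] {K : AddSubgroup G}
    {D₁ : Set G} (hD₁ : ∀ x : G, ∃! d, d ∈ D₁ ∧ x - d ∈ K) :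
    ⋃ d ∈ D₁, d +ᵥ (K : Set G) = univ :=
  eq_univ_of_forall fun x => by
    obtain ⟨d, ⟨hd, hxd⟩, -⟩ := hD₁ x
    exact mem_biUnion hd (mem_vadd_addSubgroup_iff.mpr hxd)

theorem countable_of_transversal {G : Type*} [AddCommGroup G] [TopologicalSpace G]
    [IsTopologicalAddGroup G] [SecondCountableTopology G] {K : AddSubgroup G} {D₁ : Set G}
    (hK : IsOpen (K : Set G)) (hD₁ : ∀ x : G, ∃! d, d ∈ D₁ ∧ x - d ∈ K) : D₁.Countable := by
  refine PairwiseDisjoint.countable_of_isOpen (s := fun d => d +ᵥ (K : Set G)) ?_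
    (fun d _ => hK.vadd d) (fun d _ => ⟨d, mem_vadd_addSubgroup_iff.mpr (by simp)⟩)
  refine fun d hd d' hd' hdd' => disjoint_left.mpr fun x hx hx' => hdd' ?_
  rw [mem_vadd_addSubgroup_iff] at hx hx'
  exact (hD₁ x).unique ⟨hd, hx⟩ ⟨hd', hx'⟩

theorem L2.inner_eq_integral_of_ae_eq {α : Type*} [MeasurableSpace α] {μ : Measure α}
    {u v : Lp ℂ 2 μ} {f g : α → ℂ} (hu : ⇑u =ᵐ[μ] f) (hv : ⇑v =ᵐ[μ] g) :
    inner ℂ u v = ∫ x, conj (f x) * g x ∂μ := by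
  rw [L2.inner_def]
  refine integral_congr_ae ?_
  filter_upwards [hu, hv] with x hux hvx
  rw [RCLike.inner_apply, hux, hvx, mul_comm]

theorem tsum_norm_integral_mul_conj_sq_eq_integral_norm_sq {α ι : Type*} [MeasurableSpace α]
    [DecidableEq ι] {μ : Measure α} {g : ι → α → ℂ} (hg : ∀ i, MemLp (g i) 2 μ)
    (horth : ∀ i j, ∫ x, g i x * conj (g j x) ∂μ = if i = j then 1 else 0)
    (hcomplete : ∀ f, MemLp f 2 μ → (∀ i, ∫ x, f x * conj (g i x) ∂μ = 0) → f =ᵐ[μ] 0)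
    {f : α → ℂ} (hf : MemLp f 2 μ) :
    ∑' i, ‖∫ x, f x * conj (g i x) ∂μ‖ ^ 2 = ∫ x, ‖f x‖ ^ 2 ∂μ := by
  set v : ι → Lp ℂ 2 μ := fun i => (hg i).toLp (g i)
  have hinner : ∀ {u : Lp ℂ 2 μ} {h : α → ℂ}, ⇑u =ᵐ[μ] h →
      ∀ i, inner ℂ (v i) u = ∫ x, h x * conj (g i x) ∂μ := fun hu i =>
    (L2.inner_eq_integral_of_ae_eq (hg i).coeFn_toLp hu).trans
      (integral_congr_ae (ae_of_all _ fun x => mul_comm _ _))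
  have hv : Orthonormal ℂ v := orthonormal_iff_ite.mpr fun i j => by
    rw [hinner (hg j).coeFn_toLp, horth]
    simp only [eq_comm]
  have hdense : ⊤ ≤ (Submodule.span ℂ (range v)).topologicalClosure := by
    refine (Submodule.topologicalClosure_eq_top_iff.mpr ((Submodule.eq_bot_iff _).mpr
      fun u hu => Lp.eq_zero_iff_ae_eq_zero.mpr (hcomplete _ (Lp.memLp u) fun i => ?_))).ge
    rw [← hinner (ae_eq_refl _) i]
    exact (Submodule.mem_orthogonal _ u).mp hu _ (Submodule.subset_span ⟨i, rfl⟩)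
  have hparseval := (HilbertBasis.mk hv hdense).tsum_inner_mul_inner (hf.toLp f) (hf.toLp f)
  rw [HilbertBasis.coe_mk] at hparseval
  have hterm : ∀ i, inner ℂ (hf.toLp f) (v i) * inner ℂ (v i) (hf.toLp f) =
      ((‖∫ x, f x * conj (g i x) ∂μ‖ ^ 2 : ℝ) : ℂ) := fun i => by
    rw [← inner_conj_symm, hinner hf.coeFn_toLp i, Complex.conj_mul']
    push_cast
    rfl
  have hnorm : inner ℂ (hf.toLp f) (hf.toLp f) = ((∫ x, ‖f x‖ ^ 2 ∂μ : ℝ) : ℂ) := by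
    rw [L2.inner_eq_integral_of_ae_eq hf.coeFn_toLp hf.coeFn_toLp, ← integral_complex_ofReal]
    simp_rw [Complex.conj_mul']
    push_cast
    rfl
  refine Complex.ofReal_injective ?_
  rw [Complex.ofReal_tsum, ← hnorm, ← hparseval]
  exact tsum_congr fun i => (hterm i).symm

namespace IsDualPairing

variable {G H : Type*} [AddCommGroup G] [TopologicalSpace G] [AddCommGroup H] [TopologicalSpace H]
  {p : H → G → ℂ}

theorem ne_zero (hp : IsDualPairing p) (ξ : H) (x : G) : p ξ x ≠ 0 := fun h => by
  simpa [h] using hp.norm_one ξ x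

theorem zero_left (hp : IsDualPairing p) (x : G) : p 0 x = 1 :=
  mul_left_cancel₀ (hp.ne_zero 0 x) (by rw [← hp.add_left, add_zero, mul_one])

theorem conj_eq_neg (hp : IsDualPairing p) (ξ : H) (x : G) : conj (p ξ x) = p (-ξ) x := by
  refine mul_left_cancel₀ (hp.ne_zero ξ x) ?_
  rw [Complex.mul_conj, Complex.normSq_eq_norm_sq, hp.norm_one, ← hp.add_left, add_neg_cancel,
    hp.zero_left]
  norm_num

theorem mul_conj_eq_sub (hp : IsDualPairing p) (ξ η : H) (x : G) :
    p ξ x * conj (p η x) = p (ξ - η) x := by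
  rw [hp.conj_eq_neg, ← hp.add_left, sub_eq_add_neg]

theorem continuous_right (hp : IsDualPairing p) (ξ : H) : Continuous (p ξ) :=
  hp.continuous.comp (Continuous.prodMk_right ξ)

theorem zero_mem_Kperp (hp : IsDualPairing p) (K : Set G) : (0 : H) ∈ Kperp p K :=
  fun k _ => hp.zero_left k

def charOn (hp : IsDualPairing p) (C : Set G) (ξ : H) : C(C, ℂ) :=
  ⟨fun x => p ξ x, (hp.continuous_right ξ).comp continuous_subtype_val⟩

theorem charOn_zero (hp : IsDualPairing p) (C : Set G) : hp.charOn C 0 = 1 :=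
  ContinuousMap.ext fun x => hp.zero_left x

theorem charOn_add (hp : IsDualPairing p) (C : Set G) (ξ η : H) :
    hp.charOn C (ξ + η) = hp.charOn C ξ * hp.charOn C η :=
  ContinuousMap.ext fun x => hp.add_left ξ η x

theorem star_charOn (hp : IsDualPairing p) (C : Set G) (ξ : H) :
    star (hp.charOn C ξ) = hp.charOn C (-ξ) :=
  ContinuousMap.ext fun x => hp.conj_eq_neg ξ x

def charOnSubalgebra (hp : IsDualPairing p) (C : Set G) : StarSubalgebra ℂ C(C, ℂ) where
  toSubalgebra := Algebra.adjoin ℂ (range (hp.charOn C))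
  star_mem' := by
    change Algebra.adjoin ℂ (range (hp.charOn C)) ≤ star (Algebra.adjoin ℂ (range (hp.charOn C)))
    refine Algebra.adjoin_le ?_
    rintro - ⟨ξ, rfl⟩
    exact Algebra.subset_adjoin ⟨-ξ, (hp.star_charOn C ξ).symm⟩

theorem charOnSubalgebra_toSubmodule (hp : IsDualPairing p) (C : Set G) :
    Subalgebra.toSubmodule (hp.charOnSubalgebra C).toSubalgebra =
      Submodule.span ℂ (range (hp.charOn C)) := by
  refine Algebra.adjoin_eq_span_of_subset ℂ (Subset.trans ?_ Submodule.subset_span)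
  intro x hx
  refine Submonoid.closure_induction (fun _ => id) ⟨0, hp.charOn_zero C⟩ ?_ hx
  rintro - - - - ⟨ξ, rfl⟩ ⟨η, rfl⟩
  exact ⟨ξ + η, hp.charOn_add C ξ η⟩

theorem charOnSubalgebra_separatesPoints (hp : IsDualPairing p) (C : Set G) :
    (hp.charOnSubalgebra C).SeparatesPoints := by
  intro x y hxy
  obtain ⟨ξ, hξ⟩ := hp.sep_right ((x : G) - y) (sub_ne_zero.mpr (Subtype.coe_ne_coe.mpr hxy))
  refine ⟨_, ⟨hp.charOn C ξ, Algebra.subset_adjoin ⟨ξ, rfl⟩, rfl⟩, fun h => hξ ?_⟩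
  have hsplit : p ξ x = p ξ ((x : G) - y) * p ξ y := by rw [← hp.add_right, sub_add_cancel]
  exact mul_right_cancel₀ (hp.ne_zero ξ y) (by rw [one_mul, ← hsplit]; exact h)

theorem span_charOn_closure_eq_top (hp : IsDualPairing p) (C : Set G) [CompactSpace C] :
    (Submodule.span ℂ (range (hp.charOn C))).topologicalClosure = ⊤ := by
  rw [← charOnSubalgebra_toSubmodule]
  exact congr_arg (Subalgebra.toSubmodule <| StarSubalgebra.toSubalgebra ·)
    (ContinuousMap.starSubalgebra_topologicalClosure_eq_top_of_separatesPoints _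
      (hp.charOnSubalgebra_separatesPoints C))

theorem eq_zero_of_forall_inner_toLp_charOn_eq_zero [MeasurableSpace G] [BorelSpace G]
    [TopologicalSpace.MetrizableSpace G] (hp : IsDualPairing p) (C : Set G) [CompactSpace C]
    (ν : Measure C) [IsFiniteMeasure ν] [ν.WeaklyRegular] (u : Lp ℂ 2 ν)
    (h : ∀ ξ, inner ℂ (ContinuousMap.toLp 2 ν ℂ (hp.charOn C ξ)) u = 0) : u = 0 := by
  have hdense := (ContinuousMap.toLp_denseRange ℂ ν ℂ (p := 2) ENNReal.ofNat_ne_top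
    ).topologicalClosure_map_submodule (hp.span_charOn_closure_eq_top C)
  have horth : Submodule.map (ContinuousMap.toLp 2 ν ℂ : C(C, ℂ) →L[ℂ] Lp ℂ 2 ν).toLinearMap
      (Submodule.span ℂ (range (hp.charOn C))) ≤ (ℂ ∙ u)ᗮ := by
    rw [Submodule.map_span, Submodule.span_le]
    rintro - ⟨-, ⟨ξ, rfl⟩, rfl⟩
    exact Submodule.mem_orthogonal_singleton_iff_inner_left.mpr (h ξ)
  exact (Submodule.dense_iff_topologicalClosure_eq_top.mpr hdense).eq_zero_of_inner_right ℂ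
    fun v hv => Submodule.mem_orthogonal_singleton_iff_inner_left.mp (horth hv)

theorem ae_restrict_eq_zero_of_forall_setIntegral_conj_mul_eq_zero [MeasurableSpace G]
    [BorelSpace G] [TopologicalSpace.MetrizableSpace G] (hp : IsDualPairing p) {C : Set G}
    (hC : IsCompact C) (μ : Measure G) [IsFiniteMeasureOnCompacts μ] {f : G → ℂ}
    (hf : MemLp f 2 (μ.restrict C)) (h : ∀ ξ, ∫ x in C, conj (p ξ x) * f x ∂μ = 0) :
    ∀ᵐ x ∂μ.restrict C, f x = 0 := by
  have hCm : MeasurableSet C := hC.isClosed.measurableSet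
  have : CompactSpace C := isCompact_iff_compactSpace.mp hC
  have he := MeasurableEmbedding.subtype_coe hCm
  set ν := μ.comap (Subtype.val : C → G)
  have hν : ν.map Subtype.val = μ.restrict C := map_comap_subtype_coe hCm μ
  have : IsFiniteMeasure ν := ⟨by
    rw [comap_subtype_coe_apply hCm, image_univ, Subtype.range_coe]
    exact hC.measure_lt_top⟩
  have hfν : MemLp (f ∘ Subtype.val) 2 ν := he.memLp_map_measure_iff.mp (hν ▸ hf)
  have hu : hfν.toLp _ = 0 := hp.eq_zero_of_forall_inner_toLp_charOn_eq_zero C ν _ fun ξ => by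
    rw [L2.inner_eq_integral_of_ae_eq (ContinuousMap.coeFn_toLp ν _) hfν.coeFn_toLp]
    exact (integral_subtype_comap hCm fun x => conj (p ξ x) * f x).trans (h ξ)
  rw [← hν, he.ae_map_iff]
  filter_upwards [Lp.eq_zero_iff_ae_eq_zero.mp hu, hfν.coeFn_toLp] with x hx0 hxf
  rw [← Function.comp_apply (f := f), ← hxf, hx0, Pi.zero_apply]

end IsDualPairing

theorem tfshift_indicator_one {G H : Type*} [AddCommGroup G] (p : H → G → ℂ) (K : AddSubgroup G)
    (d : G) (δ : H) :
    tfshift p (d, δ) ((K : Set G).indicator fun _ => (1 : ℂ)) =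
      (d +ᵥ (K : Set G)).indicator (p δ) := by
  funext x
  by_cases hx : x - d ∈ K <;> simp [tfshift, indicator, mem_vadd_addSubgroup_iff, hx]

theorem integral_mul_conj_indicator {α : Type*} [MeasurableSpace α] {ν : Measure α} {s : Set α}
    (hs : MeasurableSet s) (f g : α → ℂ) :
    ∫ x, f x * conj (s.indicator g x) ∂ν = ∫ x in s, conj (g x) * f x ∂ν := by
  rw [← integral_indicator hs]
  congr 1
  funext x
  by_cases hx : x ∈ s <;> simp [hx, mul_comm]

section GaborAtoms

variable {G H : Type*} [AddCommGroup G] [MeasurableSpace G] [MeasurableAdd G] {μ : Measure G}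
  {K : AddSubgroup G}

theorem integral_mul_conj_tfshift (p : H → G → ℂ) (hK : MeasurableSet (K : Set G)) (f : G → ℂ)
    (d : G) (δ : H) :
    ∫ x, f x * conj (tfshift p (d, δ) ((K : Set G).indicator fun _ => (1 : ℂ)) x) ∂μ =
      ∫ x in d +ᵥ (K : Set G), conj (p δ x) * f x ∂μ := by
  rw [tfshift_indicator_one, integral_mul_conj_indicator (hK.const_vadd d)]

theorem integral_tfshift_mul_conj_tfshift_of_sub_notMem (p : H → G → ℂ)
    (hK : MeasurableSet (K : Set G)) {d d' : G} (hdd' : d - d' ∉ K) (δ δ' : H) :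
    ∫ x, tfshift p (d, δ) ((K : Set G).indicator fun _ => (1 : ℂ)) x *
      conj (tfshift p (d', δ') ((K : Set G).indicator fun _ => (1 : ℂ)) x) ∂μ = 0 := by
  rw [integral_mul_conj_tfshift p hK, tfshift_indicator_one]
  refine setIntegral_eq_zero_of_forall_eq_zero fun x hx => ?_
  have hxd : x ∉ d +ᵥ (K : Set G) := fun hxd => hdd' <| by
    rw [mem_vadd_addSubgroup_iff] at hx hxd
    simpa using K.sub_mem hx hxd
  simp [indicator_of_notMem hxd]

variable [TopologicalSpace G] [AddCommGroup H] [TopologicalSpace H] {p : H → G → ℂ}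
  [μ.IsAddLeftInvariant]

open Classical in
theorem IsDualPairing.setIntegral_addSubgroup (hp : IsDualPairing p)
    (hK : MeasurableSet (K : Set G)) (η : H) :
    ∫ x in (K : Set G), p η x ∂μ = if η ∈ Kperp p (K : Set G) then (μ.real K : ℂ) else 0 := by
  split_ifs with hη
  · rw [setIntegral_congr_fun hK fun x hx => hη x hx, setIntegral_const, Complex.real_smul,
      mul_one]
  · obtain ⟨k, hk, hpk⟩ : ∃ k ∈ (K : Set G), p η k ≠ 1 := by
      simpa [Kperp] using hη
    exact setIntegral_addSubgroup_eq_zero μ (hp.add_right η) hk hpk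

theorem IsDualPairing.integral_tfshift_mul_conj_tfshift_self (hp : IsDualPairing p)
    (hK : MeasurableSet (K : Set G)) (d : G) (δ δ' : H) :
    ∫ x, tfshift p (d, δ) ((K : Set G).indicator fun _ => (1 : ℂ)) x *
      conj (tfshift p (d, δ') ((K : Set G).indicator fun _ => (1 : ℂ)) x) ∂μ =
      p (δ - δ') d * ∫ x in (K : Set G), p (δ - δ') x ∂μ := by
  rw [integral_mul_conj_tfshift p hK, tfshift_indicator_one,
    setIntegral_congr_fun (hK.const_vadd d) (g := p (δ - δ')) fun x hx => by
      rw [indicator_of_mem hx, mul_comm, hp.mul_conj_eq_sub],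
    setIntegral_vadd]
  simp only [hp.add_right, integral_const_mul]

end GaborAtoms

section Transversals

variable {G H : Type*} [AddCommGroup G] [TopologicalSpace G] [MeasurableSpace G]
  [AddCommGroup H] [TopologicalSpace H] {p : H → G → ℂ} {μ : Measure G} {K : AddSubgroup G}
  {D₁ : Set G} {D₂ : Set H}

theorem IsDualPairing.integral_tfshift_mul_conj_tfshift [MeasurableAdd G] [μ.IsAddLeftInvariant]
    [DecidableEq G] [DecidableEq H] (hp : IsDualPairing p) (hK : MeasurableSet (K : Set G))
    (hμK : μ K = 1) (hD₁ : ∀ x : G, ∃! d, d ∈ D₁ ∧ x - d ∈ K)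
    (hD₂ : ∀ ξ : H, ∃! δ, δ ∈ D₂ ∧ ξ - δ ∈ Kperp p (K : Set G))
    {d d' : G} (hd : d ∈ D₁) (hd' : d' ∈ D₁) {δ δ' : H} (hδ : δ ∈ D₂) (hδ' : δ' ∈ D₂) :
    ∫ x, tfshift p (d, δ) ((K : Set G).indicator fun _ => (1 : ℂ)) x *
      conj (tfshift p (d', δ') ((K : Set G).indicator fun _ => (1 : ℂ)) x) ∂μ =
      if (d, δ) = (d', δ') then 1 else 0 := by
  by_cases hdd' : d = d'
  · subst hdd'
    rw [hp.integral_tfshift_mul_conj_tfshift_self hK, hp.setIntegral_addSubgroup hK]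
    by_cases hδδ' : δ = δ'
    · subst hδδ'
      simp [hp.zero_left, hp.zero_mem_Kperp, measureReal_def, hμK]
    · have hperp : δ - δ' ∉ Kperp p (K : Set G) := fun h =>
        hδδ' (eq_of_sub_mem_of_existsUnique hD₂ (hp.zero_mem_Kperp _) hδ hδ' h)
      simp [hperp, hδδ']
  · have hK' : d - d' ∉ K := fun h =>
      hdd' (eq_of_sub_mem_of_existsUnique (S := (K : Set G)) hD₁ K.zero_mem hd hd' h)
    rw [integral_tfshift_mul_conj_tfshift_of_sub_notMem p hK hK']
    simp [hdd']

theorem IsDualPairing.setIntegral_conj_mul_eq_zero_of_transversal [MeasurableAdd G]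
    (hp : IsDualPairing p) (hK : MeasurableSet (K : Set G))
    (hD₂ : ∀ ξ : H, ∃! δ, δ ∈ D₂ ∧ ξ - δ ∈ Kperp p (K : Set G)) {d : G} {f : G → ℂ}
    (h : ∀ δ ∈ D₂, ∫ x in d +ᵥ (K : Set G), conj (p δ x) * f x ∂μ = 0) (ξ : H) :
    ∫ x in d +ᵥ (K : Set G), conj (p ξ x) * f x ∂μ = 0 := by
  obtain ⟨δ, ⟨hδ, hξδ⟩, -⟩ := hD₂ ξ
  have hcoset : ∀ x ∈ d +ᵥ (K : Set G),
      conj (p ξ x) * f x = conj (p (ξ - δ) d) * (conj (p δ x) * f x) := fun x hx => by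
    have hx : p (ξ - δ) x = p (ξ - δ) d := by
      rw [← sub_add_cancel x d, hp.add_right, hξδ _ (mem_vadd_addSubgroup_iff.mp hx), one_mul]
    rw [← mul_assoc, ← map_mul, ← hx, ← hp.add_left, sub_add_cancel]
  rw [setIntegral_congr_fun (hK.const_vadd d) hcoset, integral_const_mul, h δ hδ, mul_zero]

theorem IsDualPairing.ae_eq_zero_of_forall_integral_mul_conj_tfshift_eq_zero
    [IsTopologicalAddGroup G] [SecondCountableTopology G] [TopologicalSpace.MetrizableSpace G]
    [BorelSpace G] [IsFiniteMeasureOnCompacts μ] (hp : IsDualPairing p)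
    (hKc : IsCompact (K : Set G)) (hKo : IsOpen (K : Set G))
    (hD₁ : ∀ x : G, ∃! d, d ∈ D₁ ∧ x - d ∈ K)
    (hD₂ : ∀ ξ : H, ∃! δ, δ ∈ D₂ ∧ ξ - δ ∈ Kperp p (K : Set G)) {f : G → ℂ} (hf : MemLp f 2 μ)
    (h : ∀ d ∈ D₁, ∀ δ ∈ D₂,
      ∫ x, f x * conj (tfshift p (d, δ) ((K : Set G).indicator fun _ => (1 : ℂ)) x) ∂μ = 0) :
    f =ᵐ[μ] 0 := by
  rw [EventuallyEq, ← Measure.restrict_univ (μ := μ), ← iUnion_vadd_eq_univ_of_transversal hD₁,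
    ae_restrict_biUnion_iff _ (countable_of_transversal hKo hD₁)]
  refine fun d hd => hp.ae_restrict_eq_zero_of_forall_setIntegral_conj_mul_eq_zero (hKc.vadd d) μ
    (hf.restrict _) (hp.setIntegral_conj_mul_eq_zero_of_transversal hKo.measurableSet hD₂ ?_)
  intro δ hδ
  rw [← integral_mul_conj_tfshift p hKo.measurableSet]
  exact h d hd δ hδ

theorem IsDualPairing.memLp_tfshift_indicator [IsTopologicalAddGroup G] [BorelSpace G]
    [IsFiniteMeasureOnCompacts μ] (hp : IsDualPairing p) (hKc : IsCompact (K : Set G))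
    (hKo : IsOpen (K : Set G)) (d : G) (δ : H) :
    MemLp (tfshift p (d, δ) ((K : Set G).indicator fun _ => (1 : ℂ))) 2 μ := by
  have : IsFiniteMeasure (μ.restrict (d +ᵥ (K : Set G))) :=
    isFiniteMeasure_restrict.mpr (hKc.vadd d).measure_lt_top.ne
  rw [tfshift_indicator_one, memLp_indicator_iff_restrict (hKo.vadd d).measurableSet]
  exact .of_bound (hp.continuous_right δ).aestronglyMeasurable 1
    (ae_of_all _ fun x => (hp.norm_one δ x).le)

end Transversals

theorem onb_from_compact_open_subgroup_general
    {G₀ : Type*} [AddCommGroup G₀] [TopologicalSpace G₀] [IsTopologicalAddGroup G₀]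
    [SecondCountableTopology G₀] [TopologicalSpace.MetrizableSpace G₀] [MeasurableSpace G₀]
    [BorelSpace G₀]
    {H₀ : Type*} [AddCommGroup H₀] [TopologicalSpace H₀]
    (μ₀ : Measure G₀) [μ₀.IsAddHaarMeasure]
    (p₀ : H₀ → G₀ → ℂ) (hp₀ : IsDualPairing p₀)
    (K : AddSubgroup G₀) (hKcompact : IsCompact (K : Set G₀)) (hKopen : IsOpen (K : Set G₀))
    (hμK : μ₀ (K : Set G₀) = 1)
    (D₁ : Set G₀) (hD₁ : ∀ x : G₀, ∃! d, d ∈ D₁ ∧ x - d ∈ K)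
    (D₂ : Set H₀) (hD₂ : ∀ ξ : H₀, ∃! δ, δ ∈ D₂ ∧ ξ - δ ∈ Kperp p₀ (K : Set G₀)) :
    -- the Gabor system `M_δ T_d χ_K`
    (∀ d ∈ D₁, ∀ δ ∈ D₂, ∀ d' ∈ D₁, ∀ δ' ∈ D₂,
      ((d, δ) = (d', δ') →
        ∫ x, tfshift p₀ (d, δ) (Set.indicator (K : Set G₀) (fun _ => (1 : ℂ))) x *
          conj (tfshift p₀ (d', δ') (Set.indicator (K : Set G₀) (fun _ => (1 : ℂ))) x) ∂μ₀
          = 1) ∧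
      ((d, δ) ≠ (d', δ') →
        ∫ x, tfshift p₀ (d, δ) (Set.indicator (K : Set G₀) (fun _ => (1 : ℂ))) x *
          conj (tfshift p₀ (d', δ') (Set.indicator (K : Set G₀) (fun _ => (1 : ℂ))) x) ∂μ₀
          = 0)) ∧
    -- completeness: Parseval's identity
    (∀ f : G₀ → ℂ, MemLp f 2 μ₀ →
      ∑' q : D₁ × D₂,
        ‖∫ x, f x * conj (tfshift p₀ ((q.1 : G₀), (q.2 : H₀))
            (Set.indicator (K : Set G₀) (fun _ => (1 : ℂ))) x) ∂μ₀‖ ^ 2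
        = ∫ x, ‖f x‖ ^ 2 ∂μ₀) := by
  classical
  have horth := fun {d d' δ δ'} (hd : d ∈ D₁) (hd' : d' ∈ D₁) (hδ : δ ∈ D₂) (hδ' : δ' ∈ D₂) =>
    hp₀.integral_tfshift_mul_conj_tfshift (μ := μ₀) hKopen.measurableSet hμK hD₁ hD₂ hd hd' hδ hδ'
  refine ⟨fun d hd δ hδ d' hd' δ' hδ' => ⟨fun h => ?_, fun h => ?_⟩, fun f hf => ?_⟩
  · rw [horth hd hd' hδ hδ', if_pos h]
  · rw [horth hd hd' hδ hδ', if_neg h]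
  refine tsum_norm_integral_mul_conj_sq_eq_integral_norm_sq
    (g := fun q : D₁ × D₂ => tfshift p₀ (q.1, q.2) ((K : Set G₀).indicator fun _ => (1 : ℂ)))
    (fun q => hp₀.memLp_tfshift_indicator hKcompact hKopen _ _) (fun q q' => ?_)
    (fun f hf h => hp₀.ae_eq_zero_of_forall_integral_mul_conj_tfshift_eq_zero hKcompact hKopen
      hD₁ hD₂ hf fun d hd δ hδ => h (⟨d, hd⟩, ⟨δ, hδ⟩)) hf
  rw [horth q.1.2 q'.1.2 q.2.2 q'.2.2]
  simp only [Prod.ext_iff, Subtype.ext_iff]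

/-- **Orthonormal basis from a compact open subgroup.**  If `K` is a compact open
subgroup of `G₀` of Haar measure `1`, `D₁` a complete set of coset representatives of
`G₀/K` and `D₂` one of `Ĝ₀/K⊥`, then the Gabor system `{M_δ T_d χ_K : d ∈ D₁, δ ∈ D₂}`
is an orthonormal basis of `L²(G₀)` (orthonormality together with Parseval's identity). -/
theorem onb_from_compact_open_subgroup
    {G₀ : Type*} [AddCommGroup G₀] [TopologicalSpace G₀] [IsTopologicalAddGroup G₀]
    [LocallyCompactSpace G₀] [SecondCountableTopology G₀]
    [TopologicalSpace.MetrizableSpace G₀] [MeasurableSpace G₀] [BorelSpace G₀]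
    {H₀ : Type*} [AddCommGroup H₀] [TopologicalSpace H₀] [IsTopologicalAddGroup H₀]
    [LocallyCompactSpace H₀] [SecondCountableTopology H₀]
    [TopologicalSpace.MetrizableSpace H₀] [MeasurableSpace H₀] [BorelSpace H₀]
    (μ₀ : Measure G₀) [μ₀.IsAddHaarMeasure]
    (p₀ : H₀ → G₀ → ℂ) (hp₀ : IsDualPairing p₀)
    (K : AddSubgroup G₀) (hKcompact : IsCompact (K : Set G₀)) (hKopen : IsOpen (K : Set G₀))
    (hμK : μ₀ (K : Set G₀) = 1)
    (D₁ : Set G₀) (hD₁ : ∀ x : G₀, ∃! d, d ∈ D₁ ∧ x - d ∈ K)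
    (D₂ : Set H₀) (hD₂ : ∀ ξ : H₀, ∃! δ, δ ∈ D₂ ∧ ξ - δ ∈ Kperp p₀ (K : Set G₀)) :
    -- the Gabor system `M_δ T_d χ_K`
    (∀ d ∈ D₁, ∀ δ ∈ D₂, ∀ d' ∈ D₁, ∀ δ' ∈ D₂,
      ((d, δ) = (d', δ') →
        ∫ x, tfshift p₀ (d, δ) (Set.indicator (K : Set G₀) (fun _ => (1 : ℂ))) x *
          conj (tfshift p₀ (d', δ') (Set.indicator (K : Set G₀) (fun _ => (1 : ℂ))) x) ∂μ₀
          = 1) ∧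
      ((d, δ) ≠ (d', δ') →
        ∫ x, tfshift p₀ (d, δ) (Set.indicator (K : Set G₀) (fun _ => (1 : ℂ))) x *
          conj (tfshift p₀ (d', δ') (Set.indicator (K : Set G₀) (fun _ => (1 : ℂ))) x) ∂μ₀
          = 0)) ∧
    -- completeness: Parseval's identity
    (∀ f : G₀ → ℂ, MemLp f 2 μ₀ →
      ∑' q : D₁ × D₂,
        ‖∫ x, f x * conj (tfshift p₀ ((q.1 : G₀), (q.2 : H₀))
            (Set.indicator (K : Set G₀) (fun _ => (1 : ℂ))) x) ∂μ₀‖ ^ 2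
        = ∫ x, ‖f x‖ ^ 2 ∂μ₀) :=
  onb_from_compact_open_subgroup_general μ₀ p₀ hp₀ K hKcompact hKopen hμK D₁ hD₁ D₂ hD₂

end GSjo
end
end

section
/- Symbol calculus via twisted convolution: Let G be a second-countable metrizable LCA group. Suppose σ and τ are symbols on G×Ĝ whose spreading functions σ̂ and τ̂ belong to L¹(Ĝ×G), i.e., σ(x,ξ) = ∫_{Ĝ×G} σ̂(ω,u) ⟨ω,x⟩⟨ξ,u⟩ dω du and similarly for τ. Then the composition of the Kohn–Nirenberg operators satisfies K_σ K_τ = K_ρ, where ρ is the symbol with spreading function ρ̂ = σ̂ ♮ τ̂ ∈ L¹(Ĝ×G), the twisted convolution (σ̂ ♮ τ̂)(ξ,u) = ∫_{Ĝ×G} σ̂(ζ,y) τ̂(ξ−ζ, u−y) ⟨ξ−ζ, y⟩ dζ dy. -/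
/- Common definitions: time-frequency analysis on locally compact abelian groups,
   following Gröchenig–Strohmer, "Pseudodifferential operators on locally compact
   abelian groups and Sjöstrand's symbol class". -/

noncomputable section

open MeasureTheory Complex Filter Topology ENNReal ComplexConjugate

namespace GSjo

variable {G H : Type*}

set_option linter.unusedSectionVars false

section TwistedConvAux

/-- Auxiliary: `L¹ ∗ L²` type finiteness. If `φ` has finite integral and `h` is square
integrable, then for a.e. `x` the twisted integral `∫⁻ ω, φ ω * h (x + s ω)` is finite. -/
private lemma key_finite {G : Type*} [AddCommGroup G] [MeasurableSpace G] [MeasurableAdd₂ G]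
    {Ω : Type*} [MeasurableSpace Ω] (μ : Measure G) [SigmaFinite μ]
    [μ.IsAddRightInvariant] (π : Measure Ω) [SFinite π]
    (φ : Ω → ℝ≥0∞) (hφm : Measurable φ) (hφ : ∫⁻ ω, φ ω ∂π ≠ ∞)
    (s : Ω → G) (hs : Measurable s) (h : G → ℝ≥0∞) (hh : Measurable h)
    (hh2 : ∫⁻ x, (h x) ^ (2 : ℝ) ∂μ ≠ ∞) :
    ∀ᵐ x ∂μ, ∫⁻ ω, φ ω * h (x + s ω) ∂π < ∞ := by
  have hmeas : Measurable (Function.uncurry fun (x : G) (ω : Ω) =>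
      φ ω * h (x + s ω) ^ (2 : ℝ)) := by
    apply Measurable.mul
    · exact hφm.comp measurable_snd
    · exact (hh.comp (measurable_fst.add (hs.comp measurable_snd))).pow_const _
  have hswap : ∫⁻ x, (∫⁻ ω, φ ω * h (x + s ω) ^ (2:ℝ) ∂π) ∂μ ≠ ∞ := by
    rw [lintegral_lintegral_swap hmeas.aemeasurable]
    have : ∀ ω, ∫⁻ x, φ ω * h (x + s ω) ^ (2:ℝ) ∂μ = φ ω * ∫⁻ x, h x ^ (2:ℝ) ∂μ := by
      intro ω
      have hm' : Measurable fun x : G => h (x + s ω) ^ (2:ℝ) :=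
        (hh.comp (measurable_add_const (s ω))).pow_const _
      rw [lintegral_const_mul _ hm']
      congr 1
      exact lintegral_add_right_eq_self (fun x => h x ^ (2:ℝ)) (s ω)
    simp_rw [this]
    rw [lintegral_mul_const _ hφm]
    exact ENNReal.mul_ne_top hφ hh2
  have hIfin : ∀ᵐ x ∂μ, (∫⁻ ω, φ ω * h (x + s ω) ^ (2:ℝ) ∂π) < ∞ :=
    ae_lt_top (hmeas.lintegral_prod_right) hswap
  filter_upwards [hIfin] with x hx
  have h22 : Real.HolderConjugate 2 2 := Real.HolderConjugate.two_two
  have CS := ENNReal.lintegral_mul_le_Lp_mul_Lq π h22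
      (f := fun ω => φ ω ^ (1/2 : ℝ)) (g := fun ω => φ ω ^ (1/2 : ℝ) * h (x + s ω))
      ((hφm.pow_const _).aemeasurable)
      (((hφm.pow_const _).mul (hh.comp ((measurable_const.add hs)))).aemeasurable)
  have hφ2 : ∀ q : ℝ≥0∞, (q ^ (1/2:ℝ)) ^ (2:ℝ) = q := fun q => by
    rw [← ENNReal.rpow_mul]; norm_num
  calc ∫⁻ ω, φ ω * h (x + s ω) ∂π
      = ∫⁻ ω, ((fun ω => φ ω ^ (1/2:ℝ)) * (fun ω => φ ω ^ (1/2:ℝ) * h (x + s ω))) ω ∂π := by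
        apply lintegral_congr; intro ω
        simp only [Pi.mul_apply]
        rw [← mul_assoc, ← ENNReal.rpow_add_of_nonneg _ _ (by norm_num) (by norm_num)]
        norm_num
    _ ≤ (∫⁻ ω, (φ ω ^ (1/2:ℝ)) ^ (2:ℝ) ∂π) ^ (1/(2:ℝ)) *
        (∫⁻ ω, (φ ω ^ (1/2:ℝ) * h (x + s ω)) ^ (2:ℝ) ∂π) ^ (1/(2:ℝ)) := CS
    _ = (∫⁻ ω, φ ω ∂π) ^ (1/(2:ℝ)) *
        (∫⁻ ω, φ ω * h (x + s ω) ^ (2:ℝ) ∂π) ^ (1/(2:ℝ)) := by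
        congr 1
        · congr 1; apply lintegral_congr; intro ω; exact hφ2 _
        · congr 1; apply lintegral_congr; intro ω
          rw [ENNReal.mul_rpow_of_nonneg _ _ (by norm_num), hφ2 _]
    _ < ⊤ := ENNReal.mul_lt_top (ENNReal.rpow_lt_top_of_nonneg (by norm_num) hφ)
        (ENNReal.rpow_lt_top_of_nonneg (by norm_num) hx.ne)

variable {G H : Type*} [AddCommGroup G] [TopologicalSpace G] [IsTopologicalAddGroup G]
    [LocallyCompactSpace G] [SecondCountableTopology G] [TopologicalSpace.MetrizableSpace G]
    [MeasurableSpace G] [BorelSpace G]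
    [AddCommGroup H] [TopologicalSpace H] [IsTopologicalAddGroup H]
    [LocallyCompactSpace H] [SecondCountableTopology H] [TopologicalSpace.MetrizableSpace H]
    [MeasurableSpace H] [BorelSpace H]
    (μ : Measure G) (ν : Measure H) [μ.IsAddHaarMeasure] [ν.IsAddHaarMeasure]

private lemma prodmk_sub (w w' : H × G) : (w.1 - w'.1, w.2 - w'.2) = w - w' := by
  simp [Prod.ext_iff]

/-- The shear `(w, w') ↦ (w', w - w')` is a measurable embedding. -/
private lemma shear_emb :
    MeasurableEmbedding (fun z : (H × G) × (H × G) => (z.2, z.1 - z.2)) :=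
  ((MeasurableEquiv.prodComm).trans
    (MeasurableEquiv.shearSubRight (H × G))).measurableEmbedding

private lemma shear_mp :
    MeasurePreserving (fun z : (H × G) × (H × G) => (z.2, z.1 - z.2))
      ((ν.prod μ).prod (ν.prod μ)) ((ν.prod μ).prod (ν.prod μ)) :=
  measurePreserving_prod_sub_swap _ _

/-- Part 1: the twisted convolution of two `L¹` spreading functions is `L¹`. -/
private lemma twistedConv_integrable (p : H → G → ℂ)
    (hpc : Continuous fun q : H × G => p q.1 q.2) (hp1 : ∀ ξ x, ‖p ξ x‖ = 1)
    {F F' : H × G → ℂ} (hF : Integrable F (ν.prod μ)) (hF' : Integrable F' (ν.prod μ)) :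
    Integrable (twistedConv μ ν p F F') (ν.prod μ) := by
  set π := ν.prod μ with hπdef
  have hpm : Measurable fun q : H × G => p q.1 q.2 := hpc.measurable
  set ξ : (H × G) × (H × G) → ℂ := fun z => F z.1 * F' z.2 * p z.2.1 z.1.2 with hξdef
  have hξsm : AEStronglyMeasurable ξ (π.prod π) := by
    refine AEStronglyMeasurable.mul (AEStronglyMeasurable.mul ?_ ?_) ?_
    · exact hF.1.comp_quasiMeasurePreserving Measure.quasiMeasurePreserving_fst
    · exact hF'.1.comp_quasiMeasurePreserving Measure.quasiMeasurePreserving_snd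
    · exact (hpm.comp ((measurable_snd.fst).prodMk (measurable_fst.snd))).aestronglyMeasurable
  have hξi : Integrable ξ (π.prod π) := by
    have h0 : Integrable (fun z : (H × G) × (H × G) => F z.1 * F' z.2) (π.prod π) :=
      hF.mul_prod hF'
    refine h0.norm.mono' hξsm (Filter.Eventually.of_forall fun z => ?_)
    rw [hξdef]
    simp only [norm_mul, hp1, mul_one]
    exact le_refl _
  have hΦ : Integrable (fun z : (H × G) × (H × G) => ξ (z.2, z.1 - z.2)) (π.prod π) := by
    have := ((shear_mp μ ν).integrable_comp_emb shear_emb).2 hξi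
    exact this
  have heq : twistedConv μ ν p F F' = fun w => ∫ w', ξ (w', w - w') ∂π := by
    funext w
    unfold twistedConv
    congr 1
  rw [heq]
  exact hΦ.integral_prod_left

/-- The joint integrand for the composition of two spreading operators. -/
private def Ψaux (p : H → G → ℂ) (F F' : H × G → ℂ) (f : G → ℂ) (x : G)
    (z : (H × G) × (H × G)) : ℂ :=
  F z.1 * F' z.2 * p z.1.1 x * p z.2.1 x * p z.2.1 z.1.2 * f (x + z.1.2 + z.2.2)

private lemma psi_meas {p : H → G → ℂ} (hpm : Measurable fun q : H × G => p q.1 q.2)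
    {F F' : H × G → ℂ} (hFm : Measurable F) (hF'm : Measurable F')
    {f : G → ℂ} (hfm : Measurable f) (x : G) :
    Measurable (Ψaux p F F' f x) := by
  unfold Ψaux
  exact (((((hFm.comp measurable_fst).mul (hF'm.comp measurable_snd)).mul
    (hpm.comp ((measurable_fst.fst).prodMk measurable_const))).mul
    (hpm.comp ((measurable_snd.fst).prodMk measurable_const))).mul
    (hpm.comp ((measurable_snd.fst).prodMk (measurable_fst.snd)))).mul
    (hfm.comp ((measurable_const.add measurable_fst.snd).add measurable_snd.snd))

private lemma psi_int {p : H → G → ℂ} (hpm : Measurable fun q : H × G => p q.1 q.2)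
    (hp1 : ∀ ξ x, ‖p ξ x‖ = 1)
    {F F' : H × G → ℂ} (hFm : Measurable F) (hF'm : Measurable F')
    (hF : Integrable F (ν.prod μ)) (hF' : Integrable F' (ν.prod μ))
    {f : G → ℂ} (hfm : Measurable f)
    (hf2 : ∫⁻ x, (‖f x‖₊ : ℝ≥0∞) ^ (2:ℝ) ∂μ ≠ ∞) :
    ∀ᵐ x ∂μ, Integrable (Ψaux p F F' f x) ((ν.prod μ).prod (ν.prod μ)) := by
  set π := ν.prod μ with hπdef
  have hφfin : ∫⁻ z : (H × G) × (H × G), (‖F z.1‖₊ : ℝ≥0∞) * (‖F' z.2‖₊ : ℝ≥0∞)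
      ∂(π.prod π) ≠ ∞ := by
    rw [lintegral_prod_mul (f := fun a => (‖F a‖₊ : ℝ≥0∞)) (g := fun a => (‖F' a‖₊ : ℝ≥0∞))
      hFm.enorm.aemeasurable hF'm.enorm.aemeasurable]
    exact ENNReal.mul_ne_top ((hasFiniteIntegral_def F π).1 hF.2).ne
      ((hasFiniteIntegral_def F' π).1 hF'.2).ne
  have hkey := key_finite μ (π.prod π)
    (fun z : (H × G) × (H × G) => (‖F z.1‖₊ : ℝ≥0∞) * (‖F' z.2‖₊ : ℝ≥0∞))
    ((hFm.enorm.comp measurable_fst).mul (hF'm.enorm.comp measurable_snd)) hφfin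
    (fun z : (H × G) × (H × G) => z.1.2 + z.2.2)
    ((measurable_fst.snd).add (measurable_snd.snd))
    (fun y => (‖f y‖₊ : ℝ≥0∞)) hfm.enorm hf2
  have hp1' : ∀ (ξ : H) (y : G), ‖p ξ y‖₊ = (1 : NNReal) := fun ξ y =>
    NNReal.eq (by rw [coe_nnnorm, hp1, NNReal.coe_one])
  filter_upwards [hkey] with x hx
  refine ⟨(psi_meas hpm hFm hF'm hfm x).aestronglyMeasurable, ?_⟩
  rw [hasFiniteIntegral_def]
  have heq : ∀ z : (H × G) × (H × G), (‖Ψaux p F F' f x z‖₊ : ℝ≥0∞) =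
      ((‖F z.1‖₊ : ℝ≥0∞) * (‖F' z.2‖₊ : ℝ≥0∞)) * (‖f (x + (z.1.2 + z.2.2))‖₊ : ℝ≥0∞) := by
    intro z
    unfold Ψaux
    rw [← add_assoc]
    simp [nnnorm_mul, hp1', ENNReal.coe_mul]
  calc ∫⁻ z, (‖Ψaux p F F' f x z‖₊ : ℝ≥0∞) ∂(π.prod π)
      = ∫⁻ z : (H × G) × (H × G), ((‖F z.1‖₊ : ℝ≥0∞) * (‖F' z.2‖₊ : ℝ≥0∞)) *
          (‖f (x + (z.1.2 + z.2.2))‖₊ : ℝ≥0∞) ∂(π.prod π) := lintegral_congr heq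
    _ < ∞ := hx

/-- The composed operator, expressed as a double integral. -/
private lemma lhs_eq {p : H → G → ℂ} (hpr : ∀ ξ x y, p ξ (x + y) = p ξ x * p ξ y)
    (F F' : H × G → ℂ) (f : G → ℂ) (x : G)
    (hint : Integrable (Ψaux p F F' f x) ((ν.prod μ).prod (ν.prod μ))) :
    spreadOp μ ν p F (spreadOp μ ν p F' f) x =
      ∫ z, Ψaux p F F' f x z ∂((ν.prod μ).prod (ν.prod μ)) := by
  set π := ν.prod μ with hπdef
  rw [integral_prod _ hint]
  unfold spreadOp
  congr 1
  funext w
  rw [← integral_const_mul]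
  congr 1
  funext w'
  unfold Ψaux
  simp only
  rw [hpr w'.1 x w.2]
  ring

/-- The spreading operator of the twisted convolution, expressed as the same double
integral. -/
private lemma rhs_eq {p : H → G → ℂ} (hpl : ∀ ξ η x, p (ξ + η) x = p ξ x * p η x)
    (F F' : H × G → ℂ) (f : G → ℂ) (x : G)
    (hint : Integrable (Ψaux p F F' f x) ((ν.prod μ).prod (ν.prod μ))) :
    spreadOp μ ν p (twistedConv μ ν p F F') f x =
      ∫ z, Ψaux p F F' f x z ∂((ν.prod μ).prod (ν.prod μ)) := by
  set π := ν.prod μ with hπdef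
  have hint' : Integrable (fun z : (H × G) × (H × G) => Ψaux p F F' f x (z.2, z.1 - z.2))
      (π.prod π) := by
    have := ((shear_mp μ ν).integrable_comp_emb shear_emb).2 hint
    exact this
  have hcv : ∫ z, Ψaux p F F' f x z ∂(π.prod π) =
      ∫ z : (H × G) × (H × G), Ψaux p F F' f x (z.2, z.1 - z.2) ∂(π.prod π) :=
    ((shear_mp μ ν).integral_comp shear_emb _).symm
  rw [hcv, integral_prod _ hint']
  unfold spreadOp
  congr 1
  funext ω
  unfold twistedConv
  rw [mul_assoc, ← integral_mul_const]
  congr 1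
  funext a
  unfold Ψaux
  simp only [Prod.fst_sub, Prod.snd_sub]
  rw [prodmk_sub]
  have h1 : p ω.1 x = p a.1 x * p (ω.1 - a.1) x := by
    rw [← hpl]
    congr 1
    abel
  have h2 : x + a.2 + (ω.2 - a.2) = x + ω.2 := by abel
  rw [h1, h2]
  ring

/-- Main identity for measurable data. -/
private lemma main_meas {p : H → G → ℂ} (hpc : Continuous fun q : H × G => p q.1 q.2)
    (hp1 : ∀ ξ x, ‖p ξ x‖ = 1)
    (hpl : ∀ ξ η x, p (ξ + η) x = p ξ x * p η x)
    (hpr : ∀ ξ x y, p ξ (x + y) = p ξ x * p ξ y)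
    {F F' : H × G → ℂ} (hFm : Measurable F) (hF'm : Measurable F')
    (hF : Integrable F (ν.prod μ)) (hF' : Integrable F' (ν.prod μ))
    {f : G → ℂ} (hfm : Measurable f)
    (hf2 : ∫⁻ x, (‖f x‖₊ : ℝ≥0∞) ^ (2:ℝ) ∂μ ≠ ∞) :
    spreadOp μ ν p F (spreadOp μ ν p F' f) =ᵐ[μ]
      spreadOp μ ν p (twistedConv μ ν p F F') f := by
  filter_upwards [psi_int μ ν hpc.measurable hp1 hFm hF'm hF hF' hfm hf2] with x hx
  rw [lhs_eq μ ν hpr F F' f x hx, rhs_eq μ ν hpl F F' f x hx]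

end TwistedConvAux

/-- **Symbol calculus via twisted convolution.**  If the spreading functions
`σ̂ = F` and `τ̂ = F'` of two symbols belong to `L¹(Ĝ×G)`, then the twisted
convolution `F ♮ F'` is again in `L¹(Ĝ×G)` and `K_σ K_τ = K_ρ` on `L²(G)`, where
`ρ` is the symbol whose spreading function is `ρ̂ = σ̂ ♮ τ̂`  (the operators being
given by their spreading representations). -/
theorem symbol_calculus_twisted_convolution
    {G : Type*} [AddCommGroup G] [TopologicalSpace G] [IsTopologicalAddGroup G]
    [LocallyCompactSpace G] [SecondCountableTopology G] [TopologicalSpace.MetrizableSpace G]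
    [MeasurableSpace G] [BorelSpace G]
    {H : Type*} [AddCommGroup H] [TopologicalSpace H] [IsTopologicalAddGroup H]
    [LocallyCompactSpace H] [SecondCountableTopology H] [TopologicalSpace.MetrizableSpace H]
    [MeasurableSpace H] [BorelSpace H]
    (μ : Measure G) (ν : Measure H) [μ.IsAddHaarMeasure] [ν.IsAddHaarMeasure]
    (p : H → G → ℂ) (hp : IsDualPairing p) (hFI : FourierInversion μ ν p)
    (F F' : H × G → ℂ) (hF : Integrable F (ν.prod μ)) (hF' : Integrable F' (ν.prod μ)) :
    Integrable (twistedConv μ ν p F F') (ν.prod μ) ∧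
    ∀ f : G → ℂ, MemLp f 2 μ →
      spreadOp μ ν p F (spreadOp μ ν p F' f) =ᵐ[μ]
        spreadOp μ ν p (twistedConv μ ν p F F') f := by
  classical
  have hpc := hp.continuous
  have hp1 := hp.norm_one
  constructor
  · exact twistedConv_integrable μ ν p hpc hp1 hF hF'
  intro f hf
  set π := ν.prod μ with hπdef
  set Fm : H × G → ℂ := hF.1.mk F with hFmdef
  set F'm : H × G → ℂ := hF'.1.mk F' with hF'mdef
  set fm : G → ℂ := hf.1.mk f with hfmdef
  have hFe : F =ᵐ[π] Fm := hF.1.ae_eq_mk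
  have hF'e : F' =ᵐ[π] F'm := hF'.1.ae_eq_mk
  have hfe : f =ᵐ[μ] fm := hf.1.ae_eq_mk
  have hFmm : Measurable Fm := hF.1.stronglyMeasurable_mk.measurable
  have hF'mm : Measurable F'm := hF'.1.stronglyMeasurable_mk.measurable
  have hfmm : Measurable fm := hf.1.stronglyMeasurable_mk.measurable
  have hFmi : Integrable Fm π := hF.congr hFe
  have hF'mi : Integrable F'm π := hF'.congr hF'e
  have hfm2 : MemLp fm 2 μ := hf.ae_eq hfe
  have hfm2' : ∫⁻ x, (‖fm x‖₊ : ℝ≥0∞) ^ (2:ℝ) ∂μ ≠ ∞ := by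
    have h1 := hfm2.eLpNorm_lt_top
    rw [eLpNorm_eq_lintegral_rpow_enorm_toReal two_ne_zero ENNReal.ofNat_ne_top] at h1
    simp only [ENNReal.toReal_ofNat, enorm_eq_nnnorm] at h1
    intro hc
    rw [hc] at h1
    simp [ENNReal.top_rpow_of_pos] at h1
  obtain ⟨N, hNsub, hNm, hN0⟩ := exists_measurable_superset_of_null (ae_iff.mp hfe)
  have hfae : ∀ x : G, (fun w : H × G => f (x + w.2)) =ᵐ[π] fun w => fm (x + w.2) := by
    intro x
    have h0 : π (Set.univ ×ˢ ((fun u : G => x + u) ⁻¹' N)) = 0 := by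
      rw [hπdef, Measure.prod_prod, measure_preimage_add, hN0, mul_zero]
    refine ae_iff.mpr (measure_mono_null ?_ h0)
    intro w hw
    exact ⟨Set.mem_univ _, hNsub hw⟩
  have hg : spreadOp μ ν p F' f = spreadOp μ ν p F'm fm := by
    funext y
    unfold spreadOp
    apply integral_congr_ae
    filter_upwards [hF'e, hfae y] with w e1 e2
    rw [e1, e2]
  have htc : twistedConv μ ν p F F' = twistedConv μ ν p Fm F'm := by
    funext w
    unfold twistedConv
    apply integral_congr_ae
    have hqmp : Measure.QuasiMeasurePreserving (fun w' : H × G => w - w') π π :=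
      ((Measure.measurePreserving_sub_left ν w.1).prod
        (Measure.measurePreserving_sub_left μ w.2)).quasiMeasurePreserving
    have hsubeq : (fun w' : H × G => F' (w - w')) =ᵐ[π] fun w' => F'm (w - w') :=
      hqmp.ae_eq_comp hF'e
    filter_upwards [hFe, hsubeq] with w' e1 e2
    rw [e1, prodmk_sub, e2]
  have key := main_meas μ ν hpc hp1 hp.add_left hp.add_right hFmm hF'mm hFmi hF'mi hfmm hfm2'
  filter_upwards [key] with x hx
  calc spreadOp μ ν p F (spreadOp μ ν p F' f) x
      = spreadOp μ ν p Fm (spreadOp μ ν p F'm fm) x := by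
        rw [hg]
        unfold spreadOp
        apply integral_congr_ae
        filter_upwards [hFe] with w e1
        rw [e1]
    _ = spreadOp μ ν p (twistedConv μ ν p Fm F'm) fm x := hx
    _ = spreadOp μ ν p (twistedConv μ ν p F F') f x := by
        rw [htc]
        unfold spreadOp
        apply integral_congr_ae
        filter_upwards [hfae x] with w e1
        rw [e1]
end GSjo
end
end

section
/- Spreading representation of Kohn–Nirenberg operators: Let G be a second-countable metrizable LCA group. Let F ∈ L¹(Ĝ×G) and define the symbol σ on G×Ĝ by σ(x,ξ) = ∫_{Ĝ×G} F(ω,u) ⟨ω,x⟩⟨ξ,u⟩ dω du. Then for every f ∈ L¹(G) with f̂ ∈ L¹(Ĝ), the Kohn–Nirenberg operator satisfies K_σ f(x) = ∫_{Ĝ×G} F(ω,u) (M_ω T_{−u} f)(x) dω du for almost every x ∈ G. -/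
/- Common definitions: time-frequency analysis on locally compact abelian groups,
   following Gröchenig–Strohmer, "Pseudodifferential operators on locally compact
   abelian groups and Sjöstrand's symbol class". -/

noncomputable section

open MeasureTheory Complex Filter Topology ENNReal ComplexConjugate

namespace GSjo

variable {G H : Type*}

/-! Substituting the definition of `σ` into `K_σ f` and exchanging the `ξ`- and `(ω, u)`-integrals
(Fubini: the integrand is bounded by `|F(ω, u)| |f̂(ξ)|`, the characters being unimodular) gives,
for every `x`, `∫ F(ω, u) ⟨ω, x⟩ (𝓕⁻¹ f̂)(x + u) dω du`. By Fourier inversion `𝓕⁻¹ f̂ = f` a.e.,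
and by translation invariance of Haar measure, for a.e. `x` also `(𝓕⁻¹ f̂)(x + u) = f(x + u)` for
a.e. `(ω, u)`. -/

section Translation

variable [AddGroup G] [MeasurableSpace G] [MeasurableAdd₂ G] {μ : Measure G}
  [μ.IsAddRightInvariant] [SFinite μ] {α : Type*} [MeasurableSpace α] {ρ : Measure α} [SFinite ρ]

theorem quasiMeasurePreserving_add_comp {s : α → G} (hs : Measurable s) :
    Measure.QuasiMeasurePreserving (fun z : G × α => z.1 + s z.2) (μ.prod ρ) μ := by
  have hmeas : Measurable (fun z : G × α => z.1 + s z.2) :=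
    measurable_fst.add (hs.comp measurable_snd)
  refine ⟨hmeas, Measure.AbsolutelyContinuous.mk fun S hS hS0 => ?_⟩
  rw [Measure.map_apply hmeas hS, Measure.prod_apply_symm (hmeas hS)]
  have hfiber (a : α) : μ ((· + s a) ⁻¹' S) = 0 := by rwa [measure_preimage_add_right]
  exact (lintegral_congr hfiber).trans lintegral_zero

theorem ae_ae_add_of_ae {P : G → Prop} (hP : ∀ᵐ y ∂μ, P y) {s : α → G} (hs : Measurable s) :
    ∀ᵐ x ∂μ, ∀ᵐ a ∂ρ, P (x + s a) :=
  Measure.ae_ae_of_ae_prod ((quasiMeasurePreserving_add_comp hs).ae hP)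

theorem spreadOp_ae_congr [MeasurableSpace H] {ν : Measure H} [SFinite ν] {p : H → G → ℂ}
    {F : H × G → ℂ} {f g : G → ℂ} (hfg : f =ᵐ[μ] g) :
    spreadOp μ ν p F f =ᵐ[μ] spreadOp μ ν p F g := by
  filter_upwards [ae_ae_add_of_ae (ρ := ν.prod μ) hfg measurable_snd] with x hx
  refine integral_congr_ae ?_
  filter_upwards [hx] with w hw
  rw [hw]

end Translation

def ftInv [MeasurableSpace H] (ν : Measure H) (p : H → G → ℂ) (fh : H → ℂ) (x : G) : ℂ :=
  ∫ ξ, fh ξ * p ξ x ∂ν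

section KohnNirenberg

variable [AddCommGroup G] [TopologicalSpace G] [MeasurableSpace G] [OpensMeasurableSpace G]
  [AddCommGroup H] [TopologicalSpace H] [MeasurableSpace H] [OpensMeasurableSpace H]
  [SecondCountableTopologyEither H G] {μ : Measure G} {ν : Measure H}
  {p : H → G → ℂ}

theorem integrable_symbolOfSpread_integrand (hp : IsDualPairing p) {F : H × G → ℂ}
    (hF : Integrable F (ν.prod μ)) {fh : H → ℂ} (hfh : Integrable fh ν) (x : G) :
    Integrable (Function.uncurry fun (ξ : H) (w : H × G) =>
      F w * p w.1 x * p ξ w.2 * (fh ξ * p ξ x)) (ν.prod (ν.prod μ)) := by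
  have hphase : Measurable fun z : H × (H × G) => p z.2.1 x * p z.1 z.2.2 * p z.1 x := by
    have hm : Measurable (Function.uncurry p) := hp.continuous.measurable
    exact ((hm.comp (measurable_snd.fst.prodMk measurable_const)).mul
      (hm.comp (measurable_fst.prodMk measurable_snd.snd))).mul
      (hm.comp (measurable_fst.prodMk measurable_const))
  refine ((hfh.mul_prod hF).bdd_mul (c := 1) hphase.aestronglyMeasurable
    (.of_forall fun z => by simp [hp.norm_one])).congr (.of_forall fun z => ?_)
  simp only [Function.uncurry]
  ring

theorem knOpF_symbolOfSpread [SFinite μ] [SFinite ν] (hp : IsDualPairing p) {F : H × G → ℂ}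
    (hF : Integrable F (ν.prod μ)) {fh : H → ℂ} (hfh : Integrable fh ν) (x : G) :
    knOpF ν p (symbolOfSpread μ ν p F) fh x = spreadOp μ ν p F (ftInv ν p fh) x := by
  calc knOpF ν p (symbolOfSpread μ ν p F) fh x
      = ∫ ξ, ∫ w, F w * p w.1 x * p ξ w.2 * (fh ξ * p ξ x) ∂(ν.prod μ) ∂ν := by
        refine integral_congr_ae (.of_forall fun ξ => ?_)
        simp only [symbolOfSpread, mul_assoc, ← integral_mul_const]
    _ = ∫ w, ∫ ξ, F w * p w.1 x * p ξ w.2 * (fh ξ * p ξ x) ∂ν ∂(ν.prod μ) :=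
        integral_integral_swap (integrable_symbolOfSpread_integrand hp hF hfh x)
    _ = spreadOp μ ν p F (ftInv ν p fh) x := by
        refine integral_congr_ae (.of_forall fun w => ?_)
        simp only [ftInv, hp.add_right, ← integral_const_mul]
        congr 1 with ξ
        ring

end KohnNirenberg

theorem spreading_representation_general
    {G : Type*} [AddCommGroup G] [TopologicalSpace G] [IsTopologicalAddGroup G]
    [LocallyCompactSpace G] [SecondCountableTopology G]
    [MeasurableSpace G] [BorelSpace G]
    {H : Type*} [AddCommGroup H] [TopologicalSpace H]
    [LocallyCompactSpace H] [SecondCountableTopology H]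
    [MeasurableSpace H] [BorelSpace H]
    (μ : Measure G) (ν : Measure H) [μ.IsAddHaarMeasure] [ν.IsAddHaarMeasure]
    (p : H → G → ℂ) (hp : IsDualPairing p) (hFI : FourierInversion μ ν p)
    (F : H × G → ℂ) (hF : Integrable F (ν.prod μ))
    (f : G → ℂ) (hf : Integrable f μ) (hfhat : Integrable (ft μ p f) ν) :
    knOp μ ν p (symbolOfSpread μ ν p F) f =ᵐ[μ] spreadOp μ ν p F f := by
  have hinv : f =ᵐ[μ] ftInv ν p (ft μ p f) := hFI f hf hfhat
  filter_upwards [spreadOp_ae_congr (ν := ν) (p := p) (F := F) hinv] with x hx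
  rw [hx]
  exact knOpF_symbolOfSpread hp hF hfhat x

/-- **Spreading representation of Kohn–Nirenberg operators.**  If `F ∈ L¹(Ĝ×G)` and
`σ(x,ξ) = ∫ F(ω,u) ⟨ω,x⟩⟨ξ,u⟩ dω du`, then for every `f ∈ L¹(G)` with `f̂ ∈ L¹(Ĝ)`
one has `K_σ f = ∫ F(ω,u) M_ω T_{−u} f dω du` almost everywhere. -/
theorem spreading_representation
    {G : Type*} [AddCommGroup G] [TopologicalSpace G] [IsTopologicalAddGroup G]
    [LocallyCompactSpace G] [SecondCountableTopology G] [TopologicalSpace.MetrizableSpace G]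
    [MeasurableSpace G] [BorelSpace G]
    {H : Type*} [AddCommGroup H] [TopologicalSpace H] [IsTopologicalAddGroup H]
    [LocallyCompactSpace H] [SecondCountableTopology H] [TopologicalSpace.MetrizableSpace H]
    [MeasurableSpace H] [BorelSpace H]
    (μ : Measure G) (ν : Measure H) [μ.IsAddHaarMeasure] [ν.IsAddHaarMeasure]
    (p : H → G → ℂ) (hp : IsDualPairing p) (hFI : FourierInversion μ ν p)
    (F : H × G → ℂ) (hF : Integrable F (ν.prod μ))
    (f : G → ℂ) (hf : Integrable f μ) (hfhat : Integrable (ft μ p f) ν) :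
    knOp μ ν p (symbolOfSpread μ ν p F) f =ᵐ[μ] spreadOp μ ν p F f :=
  spreading_representation_general μ ν p hp hFI F hF f hf hfhat

end GSjo
end
end

section
/- The Kohn–Nirenberg operator pairs against the Rihaczek distribution: Let G be a second-countable metrizable LCA group, σ ∈ L^∞(G×Ĝ), f ∈ L²(G) with f̂ ∈ L¹(Ĝ), and g ∈ L¹(G) ∩ L²(G). Then ⟨K_σ f, g⟩_{L²(G)} = ⟨σ, R(g,f)⟩ := ∫_{G×Ĝ} σ(x,ξ) conj(R(g,f)(x,ξ)) dx dξ, and both integrals converge absolutely. -/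
/- Common definitions: time-frequency analysis on locally compact abelian groups,
   following Gröchenig–Strohmer, "Pseudodifferential operators on locally compact
   abelian groups and Sjöstrand's symbol class". -/

noncomputable section

open MeasureTheory Complex Filter Topology ENNReal ComplexConjugate

namespace GSjo

variable {G H : Type*}

/-! Since `|R(g,f)(x,ξ)| = |g(x)| |f̂(ξ)|`, the Rihaczek distribution of `g ∈ L¹(G)` and
`f̂ ∈ L¹(Ĝ)` is integrable on `G × Ĝ`, hence so is `σ · conj R(g,f)` for bounded `σ`; integrating
it over `ξ` first gives `K_σ f(x) conj(g(x))`, and Fubini does the rest. -/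

section Rihaczek

variable {X Y : Type*}

theorem integrable_conj [MeasurableSpace X] {μ : Measure X} {f : X → ℂ} (hf : Integrable f μ) :
    Integrable (fun x => conj (f x)) μ :=
  RCLike.conjCLE.toContinuousLinearMap.integrable_comp hf

theorem mul_conj_rihaczek (p : Y → X → ℂ) (σ : X × Y → ℂ) (g : X → ℂ) (fh : Y → ℂ)
    (z : X × Y) : σ z * conj (rihaczek p g fh z) = σ z * fh z.2 * p z.2 z.1 * conj (g z.1) := by
  simp only [rihaczek, map_mul, conj_conj]
  ring

theorem knOpF_mul_conj [MeasurableSpace Y] (ν : Measure Y) (p : Y → X → ℂ) (σ : X × Y → ℂ)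
    (fh : Y → ℂ) (g : X → ℂ) (x : X) :
    knOpF ν p σ fh x * conj (g x) = ∫ ξ, σ (x, ξ) * conj (rihaczek p g fh (x, ξ)) ∂ν := by
  simp only [knOpF, mul_conj_rihaczek, integral_mul_const]

theorem integrable_rihaczek [MeasurableSpace X] [MeasurableSpace Y] {μ : Measure X}
    {ν : Measure Y} {p : Y → X → ℂ} {g : X → ℂ} {fh : Y → ℂ}
    (hpm : AEStronglyMeasurable (fun z : X × Y => p z.2 z.1) (μ.prod ν))
    (hp1 : ∀ ξ x, ‖p ξ x‖ ≤ 1) (hg : Integrable g μ) (hfh : Integrable fh ν) :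
    Integrable (rihaczek p g fh) (μ.prod ν) := by
  have hconj_p : AEStronglyMeasurable (fun z : X × Y => conj (p z.2 z.1)) (μ.prod ν) :=
    Complex.continuous_conj.comp_aestronglyMeasurable hpm
  exact (hg.mul_prod (integrable_conj hfh)).mul_bdd hconj_p
    (ae_of_all _ fun z => (Complex.norm_conj _).trans_le (hp1 z.2 z.1))

end Rihaczek

theorem kn_pairs_with_rihaczek_general
    {G : Type*} [AddCommGroup G] [TopologicalSpace G]
    [LocallyCompactSpace G] [SecondCountableTopology G]
    [MeasurableSpace G] [BorelSpace G]
    {H : Type*} [AddCommGroup H] [TopologicalSpace H]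
    [LocallyCompactSpace H] [SecondCountableTopology H]
    [MeasurableSpace H] [BorelSpace H]
    (μ : Measure G) (ν : Measure H) [μ.IsAddHaarMeasure] [ν.IsAddHaarMeasure]
    (p : H → G → ℂ) (hp : IsDualPairing p)
    (σ : G × H → ℂ) (hσ : BddM σ)
    (fh : H → ℂ) (hfh1 : Integrable fh ν)
    (g : G → ℂ) (hg1 : Integrable g μ) :
    Integrable (fun x => knOpF ν p σ fh x * conj (g x)) μ ∧
    Integrable (fun z : G × H => σ z * conj (rihaczek p g fh z)) (μ.prod ν) ∧
    ∫ x, knOpF ν p σ fh x * conj (g x) ∂μ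
      = ∫ z : G × H, σ z * conj (rihaczek p g fh z) ∂(μ.prod ν) := by
  obtain ⟨hσm, C, hσC⟩ := hσ
  have hR : Integrable (rihaczek p g fh) (μ.prod ν) :=
    integrable_rihaczek (hp.continuous.comp continuous_swap).aestronglyMeasurable
      (fun ξ x => (hp.norm_one ξ x).le) hg1 hfh1
  have hK : Integrable (fun z : G × H => σ z * conj (rihaczek p g fh z)) (μ.prod ν) :=
    (integrable_conj hR).bdd_mul hσm.aestronglyMeasurable (ae_of_all _ hσC)
  simp only [knOpF_mul_conj]
  exact ⟨hK.integral_prod_left, hK, (integral_prod _ hK).symm⟩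

/-- **The Kohn–Nirenberg operator pairs against the Rihaczek distribution.**
For `σ ∈ L^∞(G×Ĝ)`, `f ∈ L²(G)` with Fourier–Plancherel transform `f̂ = fh ∈ L¹(Ĝ)`,
and `g ∈ L¹(G) ∩ L²(G)`:  `⟨K_σ f, g⟩ = ⟨σ, R(g,f)⟩`, both integrals converging
absolutely. -/
theorem kn_pairs_with_rihaczek
    {G : Type*} [AddCommGroup G] [TopologicalSpace G] [IsTopologicalAddGroup G]
    [LocallyCompactSpace G] [SecondCountableTopology G] [TopologicalSpace.MetrizableSpace G]
    [MeasurableSpace G] [BorelSpace G]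
    {H : Type*} [AddCommGroup H] [TopologicalSpace H] [IsTopologicalAddGroup H]
    [LocallyCompactSpace H] [SecondCountableTopology H] [TopologicalSpace.MetrizableSpace H]
    [MeasurableSpace H] [BorelSpace H]
    (μ : Measure G) (ν : Measure H) [μ.IsAddHaarMeasure] [ν.IsAddHaarMeasure]
    (p : H → G → ℂ) (hp : IsDualPairing p) (hFI : FourierInversion μ ν p)
    (σ : G × H → ℂ) (hσ : BddM σ)
    (f : G → ℂ) (fh : H → ℂ) (hf2 : MemLp f 2 μ)
    (hfh : IsPlancherelFT μ ν p f fh) (hfh1 : Integrable fh ν)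
    (g : G → ℂ) (hg1 : Integrable g μ) (hg2 : MemLp g 2 μ) :
    Integrable (fun x => knOpF ν p σ fh x * conj (g x)) μ ∧
    Integrable (fun z : G × H => σ z * conj (rihaczek p g fh z)) (μ.prod ν) ∧
    ∫ x, knOpF ν p σ fh x * conj (g x) ∂μ
      = ∫ z : G × H, σ z * conj (rihaczek p g fh z) ∂(μ.prod ν) :=
  kn_pairs_with_rihaczek_general μ ν p hp σ hσ fh hfh1 g hg1
end GSjo
end
end

section
/- Discrete pseudodifferential operators and the nonstationary Wiener algebra: Let G = ℤ with dual 𝕋 = ℝ/ℤ, and let σ : ℤ×𝕋 → ℂ be bounded and measurable. Define A_{x,u} = (F₂⁻¹σ)(x, x−u) for x,u ∈ ℤ, where F₂⁻¹σ(x,u) = ∫_𝕋 σ(x,ζ) e^{2πiζu} dζ. Then (a) for every finitely supported f : ℤ → ℂ, K_σ f(x) = Σ_{u∈ℤ} A_{x,u} f(u); and (b) for every admissible weight v on ℤ, ‖A‖_{C_v(ℤ)} = Σ_{u∈ℤ} sup_{x∈ℤ} |F₂⁻¹σ(x,u)| v(u); consequently the matrix of K_σ belongs to C_v(ℤ) if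 and only if Σ_{u∈ℤ} sup_{x∈ℤ} |F₂⁻¹σ(x,u)| v(u) < ∞ (which equals the M^{∞,1}_{(v⊗1)∘J⁻¹}(ℤ×𝕋) norm of T₂σ(x,ξ) := σ(x,−ξ) computed with the window Ψ = δ₀ ⊗ 1). -/
/- Common definitions: time-frequency analysis on locally compact abelian groups,
   following Gröchenig–Strohmer, "Pseudodifferential operators on locally compact
   abelian groups and Sjöstrand's symbol class". -/

noncomputable section

open MeasureTheory Complex Filter Topology ENNReal ComplexConjugate

namespace GSjo

variable {G H : Type*}

instance : Fact ((0 : ℝ) < 1) := ⟨zero_lt_one⟩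

/-- Partial inverse Fourier transform in the second variable of a symbol on `ℤ × 𝕋`. -/
def F2inv (σ : ℤ × AddCircle (1 : ℝ) → ℂ) (x u : ℤ) : ℂ :=
  ∫ ζ : AddCircle (1 : ℝ), σ (x, ζ) * fourier u ζ

/-- The Fourier transform of a sequence on `ℤ`. -/
def zFT (f : ℤ → ℂ) (ξ : AddCircle (1 : ℝ)) : ℂ :=
  ∑' n : ℤ, f n * conj (fourier n ξ)

/-- The Kohn–Nirenberg operator on `ℤ` with symbol `σ` on `ℤ × 𝕋`. -/
def knZ (σ : ℤ × AddCircle (1 : ℝ) → ℂ) (f : ℤ → ℂ) (x : ℤ) : ℂ :=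
  ∫ ξ : AddCircle (1 : ℝ), σ (x, ξ) * zFT f ξ * fourier x ξ

lemma fourier_sub_apply {T : ℝ} (m n : ℤ) (ξ : AddCircle T) :
    fourier (m - n) ξ = fourier m ξ * conj (fourier n ξ) := by
  rw [sub_eq_add_neg, fourier_add, fourier_neg]

lemma zFT_eq_sum_of_support_subset {f : ℤ → ℂ} {s : Finset ℤ}
    (hs : Function.support f ⊆ s) (ξ : AddCircle (1 : ℝ)) :
    zFT f ξ = ∑ u ∈ s, f u * conj (fourier u ξ) :=
  tsum_eq_sum fun u hu => by
    rw [Function.notMem_support.mp fun h => hu (hs h), zero_mul]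

lemma integrable_symbol_mul_fourier {σ : ℤ × AddCircle (1 : ℝ) → ℂ} {C : ℝ}
    (hσmeas : Measurable σ) (hσbdd : ∀ z, ‖σ z‖ ≤ C) (x n : ℤ) :
    Integrable fun ζ : AddCircle (1 : ℝ) => σ (x, ζ) * fourier n ζ := by
  refine .of_bound ?_ C (.of_forall fun ζ => ?_)
  · exact ((hσmeas.comp measurable_prodMk_left).mul
      (fourier n).continuous.measurable).aestronglyMeasurable
  · rw [norm_mul, fourier_apply, Circle.norm_coe, mul_one]
    exact hσbdd _

lemma knZ_eq_sum_of_support_subset {σ : ℤ × AddCircle (1 : ℝ) → ℂ} {C : ℝ}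
    (hσmeas : Measurable σ) (hσbdd : ∀ z, ‖σ z‖ ≤ C) {f : ℤ → ℂ} {s : Finset ℤ}
    (hs : Function.support f ⊆ s) (x : ℤ) :
    knZ σ f x = ∑ u ∈ s, F2inv σ x (x - u) * f u := by
  have integrand_eq : ∀ ξ, σ (x, ξ) * zFT f ξ * fourier x ξ
      = ∑ u ∈ s, f u * (σ (x, ξ) * fourier (x - u) ξ) := fun ξ => by
    simp only [zFT_eq_sum_of_support_subset hs, fourier_sub_apply, Finset.mul_sum,
      Finset.sum_mul]
    exact Finset.sum_congr rfl fun u _ => by ring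
  rw [knZ, funext integrand_eq, integral_finsetSum _ fun u _ =>
    (integrable_symbol_mul_fourier hσmeas hσbdd x (x - u)).const_mul (f u)]
  exact Finset.sum_congr rfl fun u _ => by rw [integral_const_mul, F2inv, mul_comm]

lemma cvNorm_apply_sub {D : Type*} [AddCommGroup D] (v : D → ℝ) (a : D → D → ℂ) :
    cvNorm v (fun x u => a x (x - u))
      = ∑' u : D, (⨆ x : D, (‖a x u‖₊ : ℝ≥0∞)) * ENNReal.ofReal (v u) := by
  simp only [cvNorm, _root_.sub_sub_cancel]

/-- **Discrete pseudodifferential operators and the nonstationary Wiener algebra.**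
(a) `K_σ` acts on finitely supported sequences as the matrix `A_{x,u} = F₂⁻¹σ(x,x−u)`;
(b) for every admissible weight `v` on `ℤ`, `‖A‖_{C_v} = Σ_u sup_x |F₂⁻¹σ(x,u)| v(u)`;
consequently the matrix of `K_σ` belongs to `C_v(ℤ)` iff this sum is finite. -/
theorem discrete_pseudodifferential_wiener_algebra
    (σ : ℤ × AddCircle (1 : ℝ) → ℂ)
    (hσmeas : Measurable σ) (hσbdd : ∃ C, ∀ z, ‖σ z‖ ≤ C) :
    (∀ f : ℤ → ℂ, (Function.support f).Finite →
      ∀ x : ℤ, knZ σ f x = ∑' u : ℤ, F2inv σ x (x - u) * f u) ∧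
    (∀ v : ℤ → ℝ, AdmissibleWeightD v →
      cvNorm v (fun x u => F2inv σ x (x - u))
        = ∑' u : ℤ, (⨆ x : ℤ, (‖F2inv σ x u‖₊ : ℝ≥0∞)) * ENNReal.ofReal (v u) ∧
      (cvNorm v (fun x u => F2inv σ x (x - u)) < ⊤ ↔
        ∑' u : ℤ, (⨆ x : ℤ, (‖F2inv σ x u‖₊ : ℝ≥0∞)) * ENNReal.ofReal (v u) < ⊤)) := by
  obtain ⟨C, hC⟩ := hσbdd
  refine ⟨fun f hf x => ?_, fun v _ => ⟨cvNorm_apply_sub v _, by rw [cvNorm_apply_sub]⟩⟩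
  have hs : Function.support f ⊆ hf.toFinset := hf.coe_toFinset.symm.subset
  rw [knZ_eq_sum_of_support_subset hσmeas hC hs]
  exact (tsum_eq_sum fun u hu => by
    rw [Function.notMem_support.mp fun h => hu (hs h), mul_zero]).symm

end GSjo
end
end
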